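/- The closure of the nontrivial boundary of the feasible region C consists of a continuous nondecreasing curve q(p) on [π, s_1), defined piecewise on each interval J_k := p*(I_k) (for 1 < k ≤ m) by q(p) = ((π − c_k)p − s_k π)/(p − s_k − c_k), together with the vertical segment {s_1} × [q_1, π], where q_1 := (π − P(S=s_1)·s_1)/(1 − P(S=s_1)). That is, the set of points (p*(μ), q*(μ)) for μ ∈ (0,1), together with its limit points, equals the graph of this curve together with that vertical segment. -/

import Mathlib

open Finset

/-!
Single-group setting.  A finite probability space `(Ω, P)`, a binary target `Y` with
base rate `π := P(Y = 1)`, and a calibrated score `S` taking `m > 1` distinct values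
`1 ≥ s_1 > ⋯ > s_m ≥ 0` (here 0-indexed: `s i` is the paper's `s_{i+1}`), each with
positive probability `w i = P(S = s i)`, are—via calibration
`P(Y = 1 ∣ S = s i) = s i`—completely described, for the purposes of classifiers
based on `S`, by the data below.  A (possibly randomized) binary classifier `R`
based on `S` (i.e. `P(R = 1 ∣ S, Y) = P(R = 1 ∣ S)`) is in turn determined by its
selection rule `t i = P(R = 1 ∣ S = s i)`, with `P(R = 1) = ∑ i, w i * t i`,
`P(Y = 1, R = 1) = ∑ i, s i * w i * t i`, `PPV(R) = P(Y = 1 ∣ R = 1)` and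
`FOR(R) = P(Y = 1 ∣ R = 0)` as given below.
-/
structure CalibScore where
  m : ℕ
  s : ℕ → ℝ
  w : ℕ → ℝ
  one_lt_m : 1 < m
  s_nonneg : ∀ i, i < m → 0 ≤ s i
  s_le_one : ∀ i, i < m → s i ≤ 1
  s_desc : ∀ i j, i < j → j < m → s j < s i
  w_pos : ∀ i, i < m → 0 < w i
  w_sum : ∑ i ∈ Finset.range m, w i = 1

namespace CalibScore

/-- Base rate `π = P(Y = 1) = E[S]` (by calibration). -/
noncomputable def pi (D : CalibScore) : ℝ := ∑ i ∈ Finset.range D.m, D.s i * D.w i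

/-- `t` is a selection rule (`t i = P(R = 1 ∣ S = s i)` for a classifier `R` based on `S`). -/
def IsSelRule (D : CalibScore) (t : ℕ → ℝ) : Prop := ∀ i, i < D.m → 0 ≤ t i ∧ t i ≤ 1

/-- Selection rate `μ = P(R = 1)`. -/
noncomputable def selRate (D : CalibScore) (t : ℕ → ℝ) : ℝ :=
  ∑ i ∈ Finset.range D.m, D.w i * t i

/-- `P(Y = 1, R = 1) = ∑ i, s i * P(S = s i) * P(R = 1 ∣ S = s i)` (by calibration). -/
noncomputable def posSel (D : CalibScore) (t : ℕ → ℝ) : ℝ :=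
  ∑ i ∈ Finset.range D.m, D.s i * D.w i * t i

/-- `PPV(R) = P(Y = 1 ∣ R = 1)`. -/
noncomputable def ppv (D : CalibScore) (t : ℕ → ℝ) : ℝ := D.posSel t / D.selRate t

/-- `FOR(R) = P(Y = 1 ∣ R = 0)`. -/
noncomputable def forr (D : CalibScore) (t : ℕ → ℝ) : ℝ :=
  (D.pi - D.posSel t) / (1 - D.selRate t)

/-- `(p, q)` is feasible with selection rate `μ`: attained by a nonconstant
classifier based on `S` with `P(R = 1) = μ`. -/
def FeasibleWith (D : CalibScore) (μ p q : ℝ) : Prop :=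
  0 < μ ∧ μ < 1 ∧ ∃ t, D.IsSelRule t ∧ D.selRate t = μ ∧ D.ppv t = p ∧ D.forr t = q

/-- The feasible region `C`. -/
def Feasible (D : CalibScore) (p q : ℝ) : Prop := ∃ μ, D.FeasibleWith μ p q

/-- `μ_k = ∑_{i ≤ k} P(S = s_i)` (1-based `k`; `μ_0 = 0`). -/
noncomputable def muk (D : CalibScore) (k : ℕ) : ℝ := ∑ i ∈ Finset.range k, D.w i

/-- `c_k = ∑_{i < k} P(S = s_i) (s_i − s_k)` (1-based `k`). -/
noncomputable def ck (D : CalibScore) (k : ℕ) : ℝ :=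
  ∑ i ∈ Finset.range (k - 1), D.w i * (D.s i - D.s (k - 1))

/-- `I_k = (μ_{k−1}, μ_k] ∩ (0, 1)` (1-based `k`). -/
def Ik (D : CalibScore) (k : ℕ) : Set ℝ :=
  Set.Ioc (D.muk (k - 1)) (D.muk k) ∩ Set.Ioo 0 1

/-- `p*(μ)`: the supremum of `p` over pairs `(p, q)` feasible with `μ` having `q ≤ π ≤ p`. -/
noncomputable def pStar (D : CalibScore) (μ : ℝ) : ℝ :=
  sSup {p | ∃ q, D.FeasibleWith μ p q ∧ q ≤ D.pi ∧ D.pi ≤ p}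

/-- `q*(μ)`: the infimum of `q` over pairs `(p, q)` feasible with `μ` having `q ≤ π ≤ p`. -/
noncomputable def qStar (D : CalibScore) (μ : ℝ) : ℝ :=
  sInf {q | ∃ p, D.FeasibleWith μ p q ∧ q ≤ D.pi ∧ D.pi ≤ p}

/-- `p_k = s_k + c_k / μ_k` (1-based `k`), the breakpoint values of the boundary. -/
noncomputable def pkF (D : CalibScore) (k : ℕ) : ℝ := D.s (k - 1) + D.ck k / D.muk k

/-- The boundary formula `q(p) = ((π − c_k) p − s_k π) / (p − s_k − c_k)` on `J_k`
(1-based `k`). -/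
noncomputable def qF (D : CalibScore) (k : ℕ) (p : ℝ) : ℝ :=
  ((D.pi - D.ck k) * p - D.s (k - 1) * D.pi) / (p - D.s (k - 1) - D.ck k)

end CalibScore

/-!
If `R` selects a fraction `μ`, then `P(Y = 1, R = 1) ≤ s_k μ + c_k` for every `k`, with equality
for the threshold rule when `μ_{k-1} ≤ μ ≤ μ_k`. Hence `p*(μ) = G(μ)/μ` and
`q*(μ) = (π - G(μ))/(1 - μ)` for the lower envelope `G` of these lines, and both are
nonincreasing in `μ`. On `(0, μ_1]`, `p* = s_1` and `q*` runs over the vertical segment; on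
`[μ_1, 1]`, `G(μ)/μ` decreases strictly and continuously from `s_1` to `π`, and `Q` is `q*`
read through its inverse. `Q` is continuous because a continuous map on a compact interval is
a quotient map onto its image.
-/

lemma continuousOn_of_comp_of_isCompact {α β γ : Type*} [TopologicalSpace α] [T2Space α]
    [TopologicalSpace β] [T2Space β] [TopologicalSpace γ] {f : α → β} {g : β → γ} {K : Set α}
    (hK : IsCompact K) (hf : ContinuousOn f K) (hgf : ContinuousOn (g ∘ f) K) :
    ContinuousOn g (f '' K) := by
  refine continuousOn_iff_isClosed.2 fun t ht => ⟨f '' (K ∩ (g ∘ f) ⁻¹' t), ?_, ?_⟩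
  · have hc := hgf.preimage_isClosed_of_isClosed hK.isClosed ht
    exact ((hK.of_isClosed_subset hc Set.inter_subset_left).image_of_continuousOn
      (hf.mono Set.inter_subset_left)).isClosed
  · ext y
    constructor
    · rintro ⟨hy, x, hx, rfl⟩
      exact ⟨⟨x, ⟨hx, hy⟩, rfl⟩, x, hx, rfl⟩
    · rintro ⟨⟨x, ⟨hx, hxt⟩, rfl⟩, -⟩
      exact ⟨hxt, x, hx, rfl⟩

namespace CalibScore

variable (D : CalibScore)

lemma m_pos : 0 < D.m := zero_lt_one.trans D.one_lt_m

lemma s_anti {i j : ℕ} (hij : i ≤ j) (hj : j < D.m) : D.s j ≤ D.s i :=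
  hij.eq_or_lt.elim (fun h => h ▸ le_rfl) fun h => (D.s_desc i j h hj).le

@[simp] lemma muk_zero : D.muk 0 = 0 := by simp [muk]

lemma muk_succ (j : ℕ) : D.muk (j + 1) = D.muk j + D.w j := sum_range_succ _ _

lemma muk_one : D.muk 1 = D.w 0 := by simp [muk_succ]

lemma muk_self : D.muk D.m = 1 := D.w_sum

lemma muk_lt {a b : ℕ} (hab : a < b) (hb : b ≤ D.m) : D.muk a < D.muk b := by
  rw [muk, muk, ← sum_range_add_sum_Ico _ hab.le, lt_add_iff_pos_right]
  exact sum_pos (fun i hi => D.w_pos i ((mem_Ico.1 hi).2.trans_le hb)) (nonempty_Ico.2 hab)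

lemma muk_le {a b : ℕ} (hab : a ≤ b) (hb : b ≤ D.m) : D.muk a ≤ D.muk b :=
  hab.eq_or_lt.elim (fun h => h ▸ le_rfl) fun h => (D.muk_lt h hb).le

lemma muk_one_pos : 0 < D.muk 1 := by simpa using D.muk_lt zero_lt_one D.one_lt_m.le

lemma muk_one_lt_one : D.muk 1 < 1 := D.muk_self ▸ D.muk_lt D.one_lt_m le_rfl

lemma muk_one_le_muk_pred : D.muk 1 ≤ D.muk (D.m - 1) :=
  D.muk_le (by have := D.one_lt_m; omega) (Nat.sub_le _ _)

lemma muk_pred_lt_one : D.muk (D.m - 1) < 1 :=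
  D.muk_self ▸ D.muk_lt (Nat.sub_lt D.m_pos one_pos) le_rfl

lemma ck_succ (j : ℕ) : D.ck (j + 1) = ∑ i ∈ range j, D.w i * (D.s i - D.s j) := by
  simp [ck]

lemma ck_succ_pos {j : ℕ} (hj1 : 1 ≤ j) (hj : j < D.m) : 0 < D.ck (j + 1) := by
  rw [ck_succ]
  refine sum_pos' (fun i hi => ?_) ⟨0, mem_range.2 hj1, ?_⟩
  · have hi := mem_range.1 hi
    exact mul_nonneg (D.w_pos i (hi.trans hj)).le (sub_nonneg.2 (D.s_anti hi.le hj))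
  · exact mul_pos (D.w_pos 0 D.m_pos) (sub_pos.2 (D.s_desc 0 j hj1 hj))

/-- The paper's `s_k μ + c_k` for `k = j + 1`. -/
noncomputable def line (j : ℕ) (μ : ℝ) : ℝ := D.s j * μ + D.ck (j + 1)

lemma line_eq_sum (j : ℕ) (μ : ℝ) :
    D.line j μ = ∑ i ∈ range j, D.s i * D.w i + D.s j * (μ - D.muk j) := by
  have hck : ∑ i ∈ range j, D.w i * (D.s i - D.s j) =
      ∑ i ∈ range j, D.s i * D.w i - D.s j * ∑ i ∈ range j, D.w i := by
    rw [mul_sum, ← sum_sub_distrib]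
    exact sum_congr rfl fun i _ => by ring
  rw [line, ck_succ, hck, muk]
  ring

lemma line_pred (μ : ℝ) : D.line (D.m - 1) μ = D.pi - D.s (D.m - 1) * (1 - μ) := by
  have hm : D.m - 1 + 1 = D.m := Nat.sub_add_cancel D.m_pos
  have hw : D.w (D.m - 1) = 1 - D.muk (D.m - 1) := by
    rw [← D.muk_self, ← hm, muk_succ, hm]
    ring
  rw [line_eq_sum, pi, ← hm, sum_range_succ, hm, hw]
  ring

lemma posSel_le_line {t : ℕ → ℝ} (ht : D.IsSelRule t) {j : ℕ} (hj : j < D.m) :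
    D.posSel t ≤ D.line j (D.selRate t) := by
  have hsplit : D.posSel t - D.s j * D.selRate t =
      ∑ i ∈ range j, D.w i * t i * (D.s i - D.s j) +
        ∑ i ∈ Ico j D.m, D.w i * t i * (D.s i - D.s j) := by
    rw [sum_range_add_sum_Ico _ hj.le, posSel, selRate, mul_sum, ← sum_sub_distrib]
    exact sum_congr rfl fun i _ => by ring
  have hlow : ∑ i ∈ range j, D.w i * t i * (D.s i - D.s j) ≤ D.ck (j + 1) := by
    rw [ck_succ]
    refine sum_le_sum fun i hi => ?_
    have hi := mem_range.1 hi
    have hw := (D.w_pos i (hi.trans hj)).le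
    have hs := sub_nonneg.2 (D.s_anti hi.le hj)
    nlinarith [(ht i (hi.trans hj)).2, mul_nonneg hw hs]
  have hhigh : ∑ i ∈ Ico j D.m, D.w i * t i * (D.s i - D.s j) ≤ 0 := by
    refine sum_nonpos fun i hi => ?_
    obtain ⟨hji, him⟩ := mem_Ico.1 hi
    exact mul_nonpos_of_nonneg_of_nonpos (mul_nonneg (D.w_pos i him).le (ht i him).1)
      (sub_nonpos.2 (D.s_anti hji him))
  rw [line]
  linarith

lemma selRate_const (μ : ℝ) : D.selRate (fun _ => μ) = μ := by
  rw [selRate, ← sum_mul, D.w_sum, one_mul]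

lemma posSel_const (μ : ℝ) : D.posSel (fun _ => μ) = D.pi * μ := by
  rw [posSel, ← sum_mul, pi]

lemma pi_mul_le_line {μ : ℝ} (h0 : 0 ≤ μ) (h1 : μ ≤ 1) {j : ℕ} (hj : j < D.m) :
    D.pi * μ ≤ D.line j μ := by
  simpa only [selRate_const, posSel_const] using
    D.posSel_le_line (t := fun _ => μ) (fun _ _ => ⟨h0, h1⟩) hj

noncomputable def threshold (j : ℕ) (μ : ℝ) (i : ℕ) : ℝ :=
  if i < j then 1 else if i = j then (μ - D.muk j) / D.w j else 0

lemma isSelRule_threshold {j : ℕ} (hj : j < D.m) {μ : ℝ}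
    (hμ : μ ∈ Set.Icc (D.muk j) (D.muk (j + 1))) : D.IsSelRule (D.threshold j μ) := by
  intro i _
  have hw := D.w_pos j hj
  rw [muk_succ] at hμ
  unfold threshold
  split_ifs
  · exact ⟨zero_le_one, le_rfl⟩
  · exact ⟨div_nonneg (by linarith [hμ.1]) hw.le, (div_le_one hw).2 (by linarith [hμ.2])⟩
  · exact ⟨le_rfl, zero_le_one⟩

lemma sum_mul_threshold (f : ℕ → ℝ) {j : ℕ} (hj : j < D.m) (μ : ℝ) :
    ∑ i ∈ range D.m, f i * D.threshold j μ i =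
      ∑ i ∈ range j, f i + f j * ((μ - D.muk j) / D.w j) := by
  have hzero : ∑ i ∈ Ico (j + 1) D.m, f i * D.threshold j μ i = 0 :=
    sum_eq_zero fun i hi => by
      have hji := (mem_Ico.1 hi).1
      simp [threshold, show ¬i < j by omega, show i ≠ j by omega]
  rw [← sum_range_add_sum_Ico _ hj, hzero, add_zero, sum_range_succ]
  congr 1
  · exact sum_congr rfl fun i hi => by simp [threshold, mem_range.1 hi]
  · simp [threshold]

lemma selRate_threshold {j : ℕ} (hj : j < D.m) (μ : ℝ) :
    D.selRate (D.threshold j μ) = μ := by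
  rw [selRate, sum_mul_threshold _ _ hj, mul_div_cancel₀ _ (D.w_pos j hj).ne', muk]
  ring

lemma posSel_threshold {j : ℕ} (hj : j < D.m) (μ : ℝ) :
    D.posSel (D.threshold j μ) = D.line j μ := by
  rw [posSel, D.sum_mul_threshold (fun i => D.s i * D.w i) hj, line_eq_sum, mul_assoc,
    mul_div_cancel₀ _ (D.w_pos j hj).ne']

lemma exists_mem_Icc_muk {a : ℕ} (ha : a < D.m) {μ : ℝ} (haμ : D.muk a ≤ μ) (hμ : μ ≤ 1) :
    ∃ j, a ≤ j ∧ j < D.m ∧ μ ∈ Set.Icc (D.muk j) (D.muk (j + 1)) := by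
  classical
  set j := Nat.findGreatest (fun k => D.muk k ≤ μ) (D.m - 1)
  have hjm : j ≤ D.m - 1 := Nat.findGreatest_le _
  refine ⟨j, Nat.le_findGreatest (by omega) haμ, by omega,
    Nat.findGreatest_spec (P := fun k => D.muk k ≤ μ) (by omega : a ≤ D.m - 1) haμ, ?_⟩
  rcases Nat.lt_or_ge j (D.m - 1) with hlt | hge
  · exact (not_le.1 (Nat.findGreatest_is_greatest (P := fun k => D.muk k ≤ μ) (k := j + 1)
      (Nat.lt_succ_self j) (by omega))).le
  · rwa [show j + 1 = D.m by omega, muk_self]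

noncomputable def maxPosSel (μ : ℝ) : ℝ :=
  (range D.m).inf' (nonempty_range_iff.2 D.m_pos.ne') (D.line · μ)

lemma maxPosSel_le_line {j : ℕ} (hj : j < D.m) (μ : ℝ) : D.maxPosSel μ ≤ D.line j μ :=
  inf'_le _ (mem_range.2 hj)

lemma posSel_le_maxPosSel {t : ℕ → ℝ} (ht : D.IsSelRule t) :
    D.posSel t ≤ D.maxPosSel (D.selRate t) :=
  le_inf' _ _ fun _ hj => D.posSel_le_line ht (mem_range.1 hj)

lemma maxPosSel_eq_line {j : ℕ} (hj : j < D.m) {μ : ℝ}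
    (hμ : μ ∈ Set.Icc (D.muk j) (D.muk (j + 1))) : D.maxPosSel μ = D.line j μ := by
  refine (D.maxPosSel_le_line hj μ).antisymm ?_
  simpa only [posSel_threshold _ hj, selRate_threshold _ hj] using
    D.posSel_le_maxPosSel (D.isSelRule_threshold hj hμ)

lemma exists_maxPosSel_eq_line {a : ℕ} (ha : a < D.m) {μ : ℝ} (haμ : D.muk a ≤ μ)
    (hμ : μ ≤ 1) : ∃ j, a ≤ j ∧ j < D.m ∧ D.maxPosSel μ = D.line j μ := by
  obtain ⟨j, haj, hj, hμj⟩ := D.exists_mem_Icc_muk ha haμ hμ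
  exact ⟨j, haj, hj, D.maxPosSel_eq_line hj hμj⟩

lemma exists_posSel_eq_maxPosSel {μ : ℝ} (h0 : 0 ≤ μ) (h1 : μ ≤ 1) :
    ∃ t, D.IsSelRule t ∧ D.selRate t = μ ∧ D.posSel t = D.maxPosSel μ := by
  obtain ⟨j, -, hj, hμj⟩ := D.exists_mem_Icc_muk D.m_pos (by rwa [muk_zero]) h1
  exact ⟨_, D.isSelRule_threshold hj hμj, D.selRate_threshold hj μ,
    by rw [D.posSel_threshold hj, D.maxPosSel_eq_line hj hμj]⟩

lemma pi_mul_le_maxPosSel {μ : ℝ} (h0 : 0 ≤ μ) (h1 : μ ≤ 1) : D.pi * μ ≤ D.maxPosSel μ :=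
  le_inf' _ _ fun _ hj => D.pi_mul_le_line h0 h1 (mem_range.1 hj)

lemma continuous_maxPosSel : Continuous D.maxPosSel :=
  Continuous.finset_inf'_apply _ fun _ _ => by unfold line; fun_prop

lemma maxPosSel_of_le_muk_one {μ : ℝ} (h0 : 0 ≤ μ) (h1 : μ ≤ D.muk 1) :
    D.maxPosSel μ = D.s 0 * μ := by
  rw [D.maxPosSel_eq_line D.m_pos ⟨by rwa [muk_zero], h1⟩, line]
  simp [ck]

lemma maxPosSel_of_muk_pred_le {μ : ℝ} (h0 : D.muk (D.m - 1) ≤ μ) (h1 : μ ≤ 1) :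
    D.maxPosSel μ = D.pi - D.s (D.m - 1) * (1 - μ) := by
  have hm : D.m - 1 + 1 = D.m := Nat.sub_add_cancel D.m_pos
  rw [D.maxPosSel_eq_line (j := D.m - 1) (by omega) ⟨h0, by rwa [hm, muk_self]⟩, line_pred]

/-- Unlike `pStar`, this is meaningful up to `μ = 1`, where it equals `π` (`maxPPV_one`). -/
noncomputable def maxPPV (μ : ℝ) : ℝ := D.maxPosSel μ / μ

noncomputable def minFOR (μ : ℝ) : ℝ := (D.pi - D.maxPosSel μ) / (1 - μ)

lemma feasibleWith_le {μ p q : ℝ} (h : D.FeasibleWith μ p q) :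
    p ≤ D.maxPPV μ ∧ D.minFOR μ ≤ q := by
  obtain ⟨h0, h1, t, ht, rfl, rfl, rfl⟩ := h
  have := D.posSel_le_maxPosSel ht
  exact ⟨div_le_div_of_nonneg_right this h0.le,
    div_le_div_of_nonneg_right (by linarith) (by linarith)⟩

lemma feasibleWith_maxPPV_minFOR {μ : ℝ} (hμ : μ ∈ Set.Ioo 0 1) :
    D.FeasibleWith μ (D.maxPPV μ) (D.minFOR μ) := by
  obtain ⟨t, ht, hsel, hpos⟩ := D.exists_posSel_eq_maxPosSel hμ.1.le hμ.2.le
  exact ⟨hμ.1, hμ.2, t, ht, hsel, by rw [ppv, hpos, hsel, maxPPV],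
    by rw [forr, hpos, hsel, minFOR]⟩

lemma pi_le_maxPPV {μ : ℝ} (h0 : 0 < μ) (h1 : μ ≤ 1) : D.pi ≤ D.maxPPV μ := by
  rw [maxPPV, le_div_iff₀ h0]
  exact D.pi_mul_le_maxPosSel h0.le h1

lemma minFOR_le_pi {μ : ℝ} (h0 : 0 ≤ μ) (h1 : μ < 1) : D.minFOR μ ≤ D.pi := by
  rw [minFOR, div_le_iff₀ (sub_pos.2 h1)]
  linarith [D.pi_mul_le_maxPosSel h0 h1.le]

lemma pStar_eq {μ : ℝ} (hμ : μ ∈ Set.Ioo 0 1) : D.pStar μ = D.maxPPV μ :=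
  IsGreatest.csSup_eq ⟨⟨_, D.feasibleWith_maxPPV_minFOR hμ, D.minFOR_le_pi hμ.1.le hμ.2,
    D.pi_le_maxPPV hμ.1 hμ.2.le⟩, fun _ ⟨_, h, _⟩ => (D.feasibleWith_le h).1⟩

lemma qStar_eq {μ : ℝ} (hμ : μ ∈ Set.Ioo 0 1) : D.qStar μ = D.minFOR μ :=
  IsLeast.csInf_eq ⟨⟨_, D.feasibleWith_maxPPV_minFOR hμ, D.minFOR_le_pi hμ.1.le hμ.2,
    D.pi_le_maxPPV hμ.1 hμ.2.le⟩, fun _ ⟨_, h, _⟩ => (D.feasibleWith_le h).2⟩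

lemma maxPPV_le_s_zero {μ : ℝ} (h0 : 0 < μ) : D.maxPPV μ ≤ D.s 0 := by
  rw [maxPPV, div_le_iff₀ h0]
  simpa [line, ck] using D.maxPosSel_le_line D.m_pos μ

lemma maxPPV_of_le_muk_one {μ : ℝ} (h0 : 0 < μ) (h1 : μ ≤ D.muk 1) : D.maxPPV μ = D.s 0 := by
  rw [maxPPV, D.maxPosSel_of_le_muk_one h0.le h1, mul_div_cancel_right₀ _ h0.ne']

lemma maxPPV_one : D.maxPPV 1 = D.pi := by
  rw [maxPPV, D.maxPosSel_of_muk_pred_le D.muk_pred_lt_one.le le_rfl]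
  ring

lemma minFOR_zero : D.minFOR 0 = D.pi := by
  rw [minFOR, D.maxPosSel_of_le_muk_one le_rfl D.muk_one_pos.le]
  simp

lemma minFOR_muk_one : D.minFOR (D.muk 1) = (D.pi - D.w 0 * D.s 0) / (1 - D.w 0) := by
  rw [minFOR, D.maxPosSel_of_le_muk_one D.muk_one_pos.le le_rfl, muk_one, mul_comm]

lemma minFOR_of_muk_pred_le {μ : ℝ} (hμ : D.muk (D.m - 1) ≤ μ) (h1 : μ < 1) :
    D.minFOR μ = D.s (D.m - 1) := by
  rw [minFOR, D.maxPosSel_of_muk_pred_le hμ h1.le, div_eq_iff (sub_pos.2 h1).ne']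
  ring

lemma s_pred_le_minFOR {μ : ℝ} (hμ : μ < 1) : D.s (D.m - 1) ≤ D.minFOR μ := by
  rw [minFOR, le_div_iff₀ (sub_pos.2 hμ)]
  linarith [D.maxPosSel_le_line (j := D.m - 1) (Nat.sub_lt D.m_pos one_pos) μ, D.line_pred μ]

lemma maxPPV_lt_maxPPV {a b : ℝ} (ha : D.muk 1 ≤ a) (hab : a < b) (hb : b ≤ 1) :
    D.maxPPV b < D.maxPPV a := by
  obtain ⟨j, hj1, hj, hGa⟩ := D.exists_maxPosSel_eq_line D.one_lt_m ha (hab.le.trans hb)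
  have ha0 : 0 < a := D.muk_one_pos.trans_le ha
  have hline (μ : ℝ) (hμ : 0 < μ) : D.line j μ / μ = D.s j + D.ck (j + 1) / μ := by
    rw [line, add_div, mul_div_cancel_right₀ _ hμ.ne']
  calc D.maxPPV b ≤ D.line j b / b :=
        div_le_div_of_nonneg_right (D.maxPosSel_le_line hj b) (ha0.trans hab).le
    _ < D.line j a / a := by
        rw [hline b (ha0.trans hab), hline a ha0]
        gcongr
        exact D.ck_succ_pos hj1 hj
    _ = D.maxPPV a := by rw [maxPPV, hGa]

lemma minFOR_le_minFOR {a b : ℝ} (ha : 0 ≤ a) (hab : a ≤ b) (hb : b < 1) :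
    D.minFOR b ≤ D.minFOR a := by
  obtain ⟨j, -, hj, hGb⟩ := D.exists_maxPosSel_eq_line D.m_pos (by rw [muk_zero]; linarith)
    hb.le
  have hd : D.pi ≤ D.line j 1 := by simpa using D.pi_mul_le_line zero_le_one le_rfl hj
  have hline (μ : ℝ) (hμ : μ < 1) :
      (D.pi - D.line j μ) / (1 - μ) = D.s j - (D.line j 1 - D.pi) / (1 - μ) := by
    field_simp [(sub_pos.2 hμ).ne']
    unfold line
    ring
  calc D.minFOR b = D.s j - (D.line j 1 - D.pi) / (1 - b) := by rw [minFOR, hGb, hline b hb]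
    _ ≤ D.s j - (D.line j 1 - D.pi) / (1 - a) := by gcongr
    _ = (D.pi - D.line j a) / (1 - a) := (hline a (hab.trans_lt hb)).symm
    _ ≤ D.minFOR a := by
        rw [minFOR]
        gcongr
        · linarith
        · exact D.maxPosSel_le_line hj a

lemma pi_lt_s_zero : D.pi < D.s 0 := by
  simpa only [maxPPV_one, D.maxPPV_of_le_muk_one D.muk_one_pos le_rfl] using
    D.maxPPV_lt_maxPPV le_rfl D.muk_one_lt_one le_rfl

lemma continuousOn_maxPPV : ContinuousOn D.maxPPV (Set.Ioi 0) :=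
  D.continuous_maxPosSel.continuousOn.div continuousOn_id fun _ h => (Set.mem_Ioi.1 h).ne'

lemma continuousOn_minFOR : ContinuousOn D.minFOR (Set.Iio 1) :=
  (continuousOn_const.sub D.continuous_maxPosSel.continuousOn).div
    (continuousOn_const.sub continuousOn_id) fun _ h => (sub_pos.2 (Set.mem_Iio.1 h)).ne'

lemma maxPPV_image_Icc : D.maxPPV '' Set.Icc (D.muk 1) 1 = Set.Icc D.pi (D.s 0) := by
  have hK : Set.Icc (D.muk 1) 1 ⊆ Set.Ioi 0 := fun _ h => D.muk_one_pos.trans_le h.1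
  refine subset_antisymm ?_ ?_
  · rintro _ ⟨μ, hμ, rfl⟩
    exact ⟨D.pi_le_maxPPV (hK hμ) hμ.2, D.maxPPV_le_s_zero (hK hμ)⟩
  · have hIVT := intermediate_value_Icc' D.muk_one_lt_one.le (D.continuousOn_maxPPV.mono hK)
    rwa [maxPPV_one, D.maxPPV_of_le_muk_one D.muk_one_pos le_rfl] at hIVT

/-- An infimum over a superlevel set, so that it is monotone by construction; on the boundary
it is `q*` as a function of `p*` (`boundaryFOR_maxPPV`). -/
noncomputable def boundaryFOR (p : ℝ) : ℝ :=
  sInf (D.minFOR '' {μ ∈ Set.Ioo 0 1 | p ≤ D.maxPPV μ})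

lemma boundaryFOR_maxPPV {μ : ℝ} (hμ : D.muk 1 ≤ μ) (h1 : μ < 1) :
    D.boundaryFOR (D.maxPPV μ) = D.minFOR μ := by
  refine IsLeast.csInf_eq ⟨⟨μ, ⟨⟨D.muk_one_pos.trans_le hμ, h1⟩, le_rfl⟩, rfl⟩, ?_⟩
  rintro _ ⟨ν, ⟨hν, hle⟩, rfl⟩
  refine D.minFOR_le_minFOR hν.1.le (not_lt.1 fun hμν => ?_) h1
  exact (D.maxPPV_lt_maxPPV hμ hμν hν.2.le).not_ge hle

lemma boundaryFOR_pi : D.boundaryFOR D.pi = D.s (D.m - 1) := by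
  have h0 := D.muk_one_pos.trans_le D.muk_one_le_muk_pred
  refine IsLeast.csInf_eq ⟨⟨_, ⟨⟨h0, D.muk_pred_lt_one⟩, D.pi_le_maxPPV h0 D.muk_pred_lt_one.le⟩,
    D.minFOR_of_muk_pred_le le_rfl D.muk_pred_lt_one⟩, ?_⟩
  rintro _ ⟨ν, ⟨hν, -⟩, rfl⟩
  exact D.s_pred_le_minFOR hν.2

lemma boundaryFOR_s_zero : D.boundaryFOR (D.s 0) = D.minFOR (D.muk 1) := by
  rw [← D.boundaryFOR_maxPPV le_rfl D.muk_one_lt_one, D.maxPPV_of_le_muk_one D.muk_one_pos le_rfl]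

lemma monotoneOn_boundaryFOR : MonotoneOn D.boundaryFOR (Set.Iic (D.s 0)) := by
  intro p _ p' hp' hpp'
  have hbdd : BddBelow (D.minFOR '' {μ ∈ Set.Ioo 0 1 | p ≤ D.maxPPV μ}) :=
    ⟨D.s (D.m - 1), Set.forall_mem_image.2 fun _ hμ => D.s_pred_le_minFOR hμ.1.2⟩
  refine csInf_le_csInf hbdd ⟨_, ⟨_, ⟨⟨D.muk_one_pos, D.muk_one_lt_one⟩, ?_⟩, rfl⟩⟩
    (Set.image_mono fun μ h => ⟨h.1, hpp'.trans h.2⟩)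
  rw [D.maxPPV_of_le_muk_one D.muk_one_pos le_rfl]
  exact hp'

lemma continuousOn_boundaryFOR : ContinuousOn D.boundaryFOR (Set.Icc D.pi (D.s 0)) := by
  rw [← D.maxPPV_image_Icc]
  refine continuousOn_of_comp_of_isCompact isCompact_Icc
    (D.continuousOn_maxPPV.mono fun _ h => D.muk_one_pos.trans_le h.1) ?_
  rw [← Set.Icc_union_Icc_eq_Icc D.muk_one_le_muk_pred D.muk_pred_lt_one.le]
  refine ContinuousOn.union_of_isClosed ?_ ?_ isClosed_Icc isClosed_Icc
  · refine (D.continuousOn_minFOR.mono fun _ h => h.2.trans_lt D.muk_pred_lt_one).congr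
      fun μ h => D.boundaryFOR_maxPPV h.1 (h.2.trans_lt D.muk_pred_lt_one)
  · refine (continuousOn_const (c := D.s (D.m - 1))).congr fun μ h => ?_
    rcases h.2.lt_or_eq with h1 | rfl
    · rw [Function.comp_apply, D.boundaryFOR_maxPPV (D.muk_one_le_muk_pred.trans h.1) h1,
        D.minFOR_of_muk_pred_le h.1 h1]
    · rw [Function.comp_apply, maxPPV_one, boundaryFOR_pi]

lemma eqOn_boundaryFOR_qF {k : ℕ} (hk : 1 < k) (hkm : k ≤ D.m) :
    Set.EqOn D.boundaryFOR (D.qF k) (D.pStar '' D.Ik k) := by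
  obtain ⟨j, rfl⟩ : ∃ j, k = j + 1 := ⟨k - 1, by omega⟩
  rintro _ ⟨μ, ⟨⟨hμj, hμj1⟩, hμ⟩, rfl⟩
  rw [Nat.add_sub_cancel] at hμj
  have hc : D.ck (j + 1) ≠ 0 := (D.ck_succ_pos (by omega) (by omega)).ne'
  have hμ0 : μ ≠ 0 := hμ.1.ne'
  have hμ1 : 1 - μ ≠ 0 := (sub_pos.2 hμ.2).ne'
  have hden : (D.s j * μ + D.ck (j + 1)) / μ - D.s j - D.ck (j + 1) =
      D.ck (j + 1) * (1 - μ) / μ := by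
    field_simp
    ring
  rw [D.pStar_eq hμ, D.boundaryFOR_maxPPV ((D.muk_le (by omega) (by omega)).trans hμj.le) hμ.2,
    maxPPV, minFOR, D.maxPosSel_eq_line (by omega) ⟨hμj.le, hμj1⟩, qF, Nat.add_sub_cancel,
    line, hden, eq_div_iff (div_ne_zero (mul_ne_zero hc hμ1) hμ0)]
  field_simp
  ring

def boundary : Set (ℝ × ℝ) := {x | ∃ μ, μ ∈ Set.Ioo (0 : ℝ) 1 ∧ x = (D.pStar μ, D.qStar μ)}

lemma mk_maxPPV_minFOR_mem_boundary {μ : ℝ} (hμ : μ ∈ Set.Ioo 0 1) :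
    (D.maxPPV μ, D.minFOR μ) ∈ D.boundary :=
  ⟨μ, hμ, by rw [D.pStar_eq hμ, D.qStar_eq hμ]⟩

lemma boundary_subset :
    D.boundary ⊆ (fun p => (p, D.boundaryFOR p)) '' Set.Icc D.pi (D.s 0) ∪
      {D.s 0} ×ˢ Set.Icc (D.minFOR (D.muk 1)) D.pi := by
  rintro _ ⟨μ, hμ, rfl⟩
  rw [D.pStar_eq hμ, D.qStar_eq hμ]
  rcases le_or_gt μ (D.muk 1) with h | h
  · exact Or.inr ⟨D.maxPPV_of_le_muk_one hμ.1 h,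
      D.minFOR_le_minFOR hμ.1.le h D.muk_one_lt_one, D.minFOR_le_pi hμ.1.le hμ.2⟩
  · refine Or.inl ⟨D.maxPPV μ, D.maxPPV_image_Icc ▸ Set.mem_image_of_mem _ ⟨h.le, hμ.2.le⟩, ?_⟩
    dsimp only
    rw [D.boundaryFOR_maxPPV h.le hμ.2]

lemma graph_Ioo_subset_boundary :
    (fun p => (p, D.boundaryFOR p)) '' Set.Ioo D.pi (D.s 0) ⊆ D.boundary := by
  rintro _ ⟨p, hp, rfl⟩
  obtain ⟨μ, hμ, rfl⟩ : p ∈ D.maxPPV '' Set.Icc (D.muk 1) 1 :=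
    D.maxPPV_image_Icc ▸ Set.Ioo_subset_Icc_self hp
  have h1 : μ < 1 := hμ.2.lt_of_ne (by rintro rfl; exact hp.1.ne' D.maxPPV_one)
  dsimp only
  rw [D.boundaryFOR_maxPPV hμ.1 h1]
  exact D.mk_maxPPV_minFOR_mem_boundary ⟨D.muk_one_pos.trans_le hμ.1, h1⟩

lemma graph_subset_closure_boundary :
    (fun p => (p, D.boundaryFOR p)) '' Set.Ico D.pi (D.s 0) ⊆ closure D.boundary := by
  have hcl := closure_Ioo D.pi_lt_s_zero.ne
  calc _ ⊆ (fun p => (p, D.boundaryFOR p)) '' closure (Set.Ioo D.pi (D.s 0)) :=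
        Set.image_mono (hcl ▸ Set.Ico_subset_Icc_self)
    _ ⊆ closure ((fun p => (p, D.boundaryFOR p)) '' Set.Ioo D.pi (D.s 0)) :=
        ContinuousOn.image_closure (hcl ▸ continuousOn_id.prodMk D.continuousOn_boundaryFOR)
    _ ⊆ closure D.boundary := closure_mono D.graph_Ioo_subset_boundary

lemma segment_subset_closure_boundary :
    {D.s 0} ×ˢ Set.Icc (D.minFOR (D.muk 1)) D.pi ⊆ closure D.boundary := by
  have hcl := closure_Ioc D.muk_one_pos.ne
  have hcont : ContinuousOn D.minFOR (Set.Icc 0 (D.muk 1)) :=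
    D.continuousOn_minFOR.mono fun _ h => h.2.trans_lt D.muk_one_lt_one
  rintro ⟨_, q⟩ ⟨rfl, hq⟩
  obtain ⟨μ, hμ, rfl⟩ := intermediate_value_Icc' D.muk_one_pos.le hcont (D.minFOR_zero ▸ hq)
  have hmem : (D.s 0, D.minFOR μ) ∈
      (fun ν => (D.s 0, D.minFOR ν)) '' closure (Set.Ioc 0 (D.muk 1)) := ⟨μ, hcl ▸ hμ, rfl⟩
  refine closure_mono ?_ (ContinuousOn.image_closure ?_ hmem)
  · rintro _ ⟨ν, hν, rfl⟩
    rw [← D.maxPPV_of_le_muk_one hν.1 hν.2]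
    exact D.mk_maxPPV_minFOR_mem_boundary ⟨hν.1, hν.2.trans_lt D.muk_one_lt_one⟩
  · exact hcl ▸ continuousOn_const.prodMk hcont

lemma closure_boundary :
    closure D.boundary = (fun p => (p, D.boundaryFOR p)) '' Set.Ico D.pi (D.s 0) ∪
      {D.s 0} ×ˢ Set.Icc (D.minFOR (D.muk 1)) D.pi := by
  refine subset_antisymm ?_
    (Set.union_subset D.graph_subset_closure_boundary D.segment_subset_closure_boundary)
  have hclosed : IsClosed ((fun p => (p, D.boundaryFOR p)) '' Set.Icc D.pi (D.s 0) ∪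
      {D.s 0} ×ˢ Set.Icc (D.minFOR (D.muk 1)) D.pi) :=
    (isCompact_Icc.image_of_continuousOn
      (continuousOn_id.prodMk D.continuousOn_boundaryFOR)).isClosed.union
      (isClosed_singleton.prod isClosed_Icc)
  refine (closure_minimal D.boundary_subset hclosed).trans
    (Set.union_subset ?_ Set.subset_union_right)
  rintro _ ⟨p, hp, rfl⟩
  rcases hp.2.lt_or_eq with h | rfl
  · exact Or.inl ⟨p, ⟨hp.1, h⟩, rfl⟩
  · refine Or.inr ⟨rfl, ?_⟩
    dsimp only
    rw [boundaryFOR_s_zero]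
    exact ⟨le_rfl, D.minFOR_le_pi D.muk_one_pos.le D.muk_one_lt_one⟩

end CalibScore

/-- The closure of the nontrivial boundary of the feasible region
`C` — the set of points `(p*(μ), q*(μ))` for `μ ∈ (0,1)` together with its limit
points — consists of a continuous nondecreasing curve `Q` on `[π, s_1)`, equal on each
interval `J_k = p*(I_k)` (for `1 < k ≤ m`) to
`p ↦ ((π − c_k) p − s_k π)/(p − s_k − c_k)`, together with the vertical segment
`{s_1} × [q_1, π]`, where `q_1 = (π − P(S = s_1) s_1)/(1 − P(S = s_1))`. -/
theorem stmt2 (D : CalibScore) :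
    ∃ Q : ℝ → ℝ,
      ContinuousOn Q (Set.Ico D.pi (D.s 0)) ∧
      MonotoneOn Q (Set.Ico D.pi (D.s 0)) ∧
      (∀ k, 1 < k → k ≤ D.m → Set.EqOn Q (D.qF k) (D.pStar '' D.Ik k)) ∧
      closure {x : ℝ × ℝ | ∃ μ, μ ∈ Set.Ioo (0 : ℝ) 1 ∧ x = (D.pStar μ, D.qStar μ)} =
        ((fun p => (p, Q p)) '' Set.Ico D.pi (D.s 0)) ∪
          (({D.s 0} : Set ℝ) ×ˢ
            Set.Icc ((D.pi - D.w 0 * D.s 0) / (1 - D.w 0)) D.pi) := by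
  refine ⟨D.boundaryFOR, D.continuousOn_boundaryFOR.mono Set.Ico_subset_Icc_self,
    D.monotoneOn_boundaryFOR.mono fun _ h => h.2.le, fun _ => D.eqOn_boundaryFOR_qF, ?_⟩
  rw [← D.minFOR_muk_one]
  exact D.closure_boundary
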